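/- Let Γ be a graph and let 𝔤 : AΓ → AC(AΓ) be the canonical coalgebra structure map sending each vertex generator v to [v]. Then an element g ∈ AΓ satisfies 𝔤(g) = [g] if and only if g is (the image in AΓ of) a vertex of Γ. -/

import Mathlib

/-- A (reflexive, symmetric) graph: a set of vertices with a reflexive
symmetric relation. -/
structure Gph : Type 1 where
  V : Type
  rel : V → V → Prop
  refl : ∀ v, rel v v
  symm : ∀ {v w}, rel v w → rel w v

/-- A homomorphism of graphs: a function on vertices preserving the relation. -/
@[ext]
structure GphHom (Γ Δ : Gph) where
  toFun : Γ.V → Δ.V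
  map_rel : ∀ {v w}, Γ.rel v w → Δ.rel (toFun v) (toFun w)

/-- The identity graph homomorphism. -/
def GphHom.id (Γ : Gph) : GphHom Γ Γ :=
  ⟨fun v => v, fun h => h⟩

/-- Composition of graph homomorphisms. -/
def GphHom.comp {Γ Δ Θ : Gph} (ψ : GphHom Δ Θ) (φ : GphHom Γ Δ) : GphHom Γ Θ :=
  ⟨fun v => ψ.toFun (φ.toFun v), fun h => ψ.map_rel (φ.map_rel h)⟩

/-- The commutator relators of the right-angled Artin group of `Γ`. -/
def raagRels (Γ : Gph) : Set (FreeGroup Γ.V) :=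
  { r | ∃ v w, Γ.rel v w ∧
      r = FreeGroup.of v * FreeGroup.of w * (FreeGroup.of v)⁻¹ * (FreeGroup.of w)⁻¹ }

/-- The right-angled Artin group of a graph `Γ`: generated by the vertices,
with commutation relations given by the edges. -/
abbrev Raag (Γ : Gph) : Type :=
  PresentedGroup (raagRels Γ)

/-- The image of a vertex `v` as a generator of the right-angled Artin group. -/
def Raag.of {Γ : Gph} (v : Γ.V) : Raag Γ :=
  PresentedGroup.of v

/-- Related vertices commute in the right-angled Artin group. -/
theorem Raag.commute_of {Γ : Gph} {v w : Γ.V} (h : Γ.rel v w) :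
    Commute (Raag.of v) (Raag.of w) := by
  have h1 : (PresentedGroup.mk (raagRels Γ))
      (FreeGroup.of v * FreeGroup.of w * (FreeGroup.of v)⁻¹ * (FreeGroup.of w)⁻¹) = 1 := by
    apply (QuotientGroup.eq_one_iff _).2
    exact Subgroup.subset_normalClosure ⟨v, w, h, rfl⟩
  rw [← commutatorElement_eq_one_iff_commute]
  simp only [commutatorElement_def, map_mul, map_inv] at h1 ⊢
  exact h1

/-- The universal property of the right-angled Artin group. -/
def Raag.lift {Γ : Gph} {G : Type*} [Group G] (f : Γ.V → G)
    (hf : ∀ {v w}, Γ.rel v w → Commute (f v) (f w)) : Raag Γ →* G :=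
  PresentedGroup.toGroup (f := f) (by
    rintro r ⟨v, w, hvw, rfl⟩
    have := commutatorElement_eq_one_iff_commute.2 (hf hvw)
    rw [commutatorElement_def] at this
    simpa only [map_mul, map_inv, FreeGroup.lift_apply_of] using this)

@[simp]
theorem Raag.lift_of {Γ : Gph} {G : Type*} [Group G] (f : Γ.V → G)
    (hf : ∀ {v w}, Γ.rel v w → Commute (f v) (f w)) (v : Γ.V) :
    Raag.lift f hf (Raag.of v) = f v :=
  PresentedGroup.toGroup.of _

theorem Raag.hom_ext {Γ : Gph} {G : Type*} [Group G] {f g : Raag Γ →* G}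
    (h : ∀ v, f (Raag.of v) = g (Raag.of v)) : f = g :=
  PresentedGroup.ext h

/-- The group homomorphism `Aφ` induced by a graph homomorphism `φ`. -/
def GphHom.map {Γ Δ : Gph} (φ : GphHom Γ Δ) : Raag Γ →* Raag Δ :=
  Raag.lift (fun v => Raag.of (φ.toFun v)) (fun h => Raag.commute_of (φ.map_rel h))

@[simp]
theorem GphHom.map_of {Γ Δ : Gph} (φ : GphHom Γ Δ) (v : Γ.V) :
    φ.map (Raag.of v) = Raag.of (φ.toFun v) :=
  Raag.lift_of _ (fun h => Raag.commute_of (φ.map_rel h)) v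

/-- The commutation graph of a group `G`: vertices are elements of `G`,
related exactly when they commute. -/
abbrev commGraph (G : Type) [Group G] : Gph where
  V := G
  rel g h := g * h = h * g
  refl _ := rfl
  symm h := h.symm

/-- `AC G`: the right-angled Artin group of the commutation graph of `G`. -/
abbrev AC (G : Type) [Group G] : Type :=
  Raag (commGraph G)

/-- `ACf : ACG →* ACH`, `[g] ↦ [f g]`, induced by a group homomorphism `f`. -/
def ACmap {G H : Type} [Group G] [Group H] (f : G →* H) : AC G →* AC H :=
  GphHom.map (Γ := commGraph G) (Δ := commGraph H)
    ⟨f, fun {a b} h => show f a * f b = f b * f a by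
      rw [← map_mul, show a * b = b * a from h, map_mul]⟩

@[simp]
theorem ACmap_of {G H : Type} [Group G] [Group H] (f : G →* H) (g : G) :
    ACmap f (Raag.of (Γ := commGraph G) g) = Raag.of (Γ := commGraph H) (f g) :=
  GphHom.map_of _ _

/-- The counit `ε_G : ACG →* G`, `[g] ↦ g`. -/
def ACcounit (G : Type) [Group G] : AC G →* G :=
  Raag.lift (Γ := commGraph G) (fun g => g) (fun h => h)

@[simp]
theorem ACcounit_of {G : Type} [Group G] (g : G) :
    ACcounit G (Raag.of (Γ := commGraph G) g) = g :=
  Raag.lift_of (Γ := commGraph G) (fun g => g) (fun h => h) g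

/-- The comultiplication `δ_G : ACG →* AC(ACG)`, `[g] ↦ [[g]]`. -/
def ACcomul (G : Type) [Group G] : AC G →* AC (AC G) :=
  Raag.lift (Γ := commGraph G)
    (fun g => Raag.of (Γ := commGraph (AC G)) (Raag.of (Γ := commGraph G) g))
    (fun h => Raag.commute_of (Raag.commute_of h))

@[simp]
theorem ACcomul_of {G : Type} [Group G] (g : G) :
    ACcomul G (Raag.of (Γ := commGraph G) g) =
      Raag.of (Γ := commGraph (AC G)) (Raag.of (Γ := commGraph G) g) :=
  Raag.lift_of (Γ := commGraph G) _ (fun h => Raag.commute_of (Raag.commute_of h)) g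

/-- The canonical `AC`-coalgebra structure map on a right-angled Artin group,
sending each vertex generator `v` to `[v]`. -/
def raagCoalgStr (Γ : Gph) : Raag Γ →* AC (Raag Γ) :=
  Raag.lift (fun v => Raag.of (Γ := commGraph (Raag Γ)) (Raag.of v))
    (fun h => Raag.commute_of (Raag.commute_of h))

@[simp]
theorem raagCoalgStr_of {Γ : Gph} (v : Γ.V) :
    raagCoalgStr Γ (Raag.of v) = Raag.of (Γ := commGraph (Raag Γ)) (Raag.of v) :=
  Raag.lift_of _ (fun h => Raag.commute_of (Raag.commute_of h)) v

/-- An `AC`-coalgebra structure on a group `G` is a group homomorphism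
`𝔤 : G →* ACG` satisfying the counit and coassociativity laws. -/
def IsACCoalgebra {G : Type} [Group G] (𝔤 : G →* AC G) : Prop :=
  (ACcounit G).comp 𝔤 = MonoidHom.id G ∧ (ACmap 𝔤).comp 𝔤 = (ACcomul G).comp 𝔤

/-- `f` is an `AC`-cohomomorphism from `(G, 𝔤)` to `(H, 𝔥)`. -/
def IsACCohom {G H : Type} [Group G] [Group H]
    (𝔤 : G →* AC G) (𝔥 : H →* AC H) (f : G →* H) : Prop :=
  𝔥.comp f = (ACmap f).comp 𝔤

/-! The free abelian group on `Γ.V` is the abelianisation of `AΓ`. A graph homomorphism `φ`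
induces `mapDomain φ` there, so `φ.map x` can only equal a generator `[w]` if `w` lies in the
image of `φ`. The canonical structure map `AΓ → AC(AΓ)` is the map induced by the graph
homomorphism `v ↦ v` from `Γ` to the commutation graph of `AΓ`, so `𝔤(g) = [g]` forces `g` to
be a vertex. -/

namespace Raag

noncomputable def toFreeAbelian (Γ : Gph) : Raag Γ →* Multiplicative (Γ.V →₀ ℤ) :=
  Raag.lift (fun v => Multiplicative.ofAdd (Finsupp.single v 1)) (fun _ => Commute.all _ _)

@[simp]
theorem toFreeAbelian_of {Γ : Gph} (v : Γ.V) :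
    toFreeAbelian Γ (Raag.of v) = Multiplicative.ofAdd (Finsupp.single v 1) :=
  Raag.lift_of _ (fun _ => Commute.all _ _) v

theorem toFreeAbelian_map {Γ Δ : Gph} (φ : GphHom Γ Δ) (x : Raag Γ) :
    (toFreeAbelian Δ (φ.map x)).toAdd = (toFreeAbelian Γ x).toAdd.mapDomain φ.toFun := by
  have : (toFreeAbelian Δ).comp φ.map =
      (Finsupp.mapDomain.addMonoidHom φ.toFun).toMultiplicative.comp (toFreeAbelian Γ) :=
    Raag.hom_ext fun v => by simp
  exact congrArg Multiplicative.toAdd (DFunLike.congr_fun this x)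

theorem exists_eq_of_map_eq_of {Γ Δ : Gph} (φ : GphHom Γ Δ) {x : Raag Γ} {w : Δ.V}
    (h : φ.map x = Raag.of w) : ∃ v, φ.toFun v = w := by
  have hsingle := toFreeAbelian_map φ x
  rw [h, toFreeAbelian_of, toAdd_ofAdd] at hsingle
  exact Finsupp.mem_range_of_mapDomain_ne_zero (x := (toFreeAbelian Γ x).toAdd)
    (by simp [← hsingle])

def ofGphHom (Γ : Gph) : GphHom Γ (commGraph (Raag Γ)) :=
  ⟨Raag.of, fun h => Raag.commute_of h⟩

end Raag

theorem raagCoalgStr_eq_map (Γ : Gph) : raagCoalgStr Γ = (Raag.ofGphHom Γ).map :=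
  Raag.hom_ext fun v => by simp [Raag.ofGphHom]

/-- An element `g ∈ AΓ` satisfies `𝔤(g) = [g]` (for `𝔤` the canonical coalgebra
structure map) if and only if `g` is the image of a vertex of `Γ`. -/
theorem coalgStr_eq_of_iff_vertex {Γ : Gph} (g : Raag Γ) :
    raagCoalgStr Γ g = Raag.of (Γ := commGraph (Raag Γ)) g ↔ ∃ v : Γ.V, g = Raag.of v := by
  refine ⟨fun h => ?_, fun ⟨v, hv⟩ => hv ▸ raagCoalgStr_of v⟩
  rw [raagCoalgStr_eq_map] at h
  obtain ⟨v, hv⟩ := Raag.exists_eq_of_map_eq_of _ h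
  exact ⟨v, hv.symm⟩
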